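/- arXiv:2103.09053 — 5 statements merged into one kernel-verified Lean document; each statement's English description precedes it below -/
import Mathlib

section
/- Let T0 = λ^α/μ^α, and consider the 2×2 real matrices F = [[0, β^α·T0], [0, 0]] and V = [[δ^α, 0], [−N·δ^α, c^α]]. Then V is invertible and the spectral radius of F·V⁻¹ equals β^α·λ^α·N/(μ^α·c^α); i.e. the basic reproduction number of the model is R0 = β^α·λ^α·N/(μ^α·c^α). -/
open Matrix

lemma spec_tri (a b : ℝ) :
    spectrum ℝ (!![a, b; 0, 0] : Matrix (Fin 2) (Fin 2) ℝ) = {0, a} := by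
  ext x
  rw [spectrum.mem_iff]
  have h1 : (algebraMap ℝ (Matrix (Fin 2) (Fin 2) ℝ) x - !![a, b; 0, 0]) =
      !![x - a, -b; 0, x] := by
    ext i j
    fin_cases i <;> fin_cases j <;>
      simp [Matrix.algebraMap_matrix_apply]
  rw [h1, Matrix.isUnit_iff_isUnit_det, Matrix.det_fin_two_of, isUnit_iff_ne_zero]
  constructor
  · intro h
    have h' : (x - a) * x - -b * 0 = 0 := by tauto
    have : (x - a) * x = 0 := by linarith [h']
    rcases mul_eq_zero.1 this with h | h
    · right; simp only [Set.mem_singleton_iff]; linarith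
    · left; exact h
  · rintro (h | h) <;> simp_all

lemma spec_radius_tri (a b : ℝ) (ha : 0 ≤ a) :
    spectralRadius ℝ (!![a, b; 0, 0] : Matrix (Fin 2) (Fin 2) ℝ) = ENNReal.ofReal a := by
  rw [spectralRadius, spec_tri a b]
  have : ({0, a} : Set ℝ) = insert 0 {a} := rfl
  rw [this, iSup_insert, iSup_singleton]
  have ofReal_norm_eq_coe_nnnorm : ∀ x : ℝ, ENNReal.ofReal ‖x‖ = ↑‖x‖₊ :=
    fun x => ENNReal.ofReal_eq_coe_nnreal (norm_nonneg x)
  simp [← ofReal_norm_eq_coe_nnnorm, Real.norm_of_nonneg ha]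

/-- With `T0 = λ^α/μ^α`, `F = [[0, β^α·T0],[0,0]]` and
`V = [[δ^α, 0],[−N·δ^α, c^α]]`, the matrix `V` is invertible and the spectral radius
of `F·V⁻¹` equals `β^α·λ^α·N/(μ^α·c^α)`, i.e. the basic reproduction number is
`R0 = β^α·λ^α·N/(μ^α·c^α)`. -/
theorem basic_reproduction_number
    (lam β μ δ N c α : ℝ)
    (hlam : 0 < lam) (hβ : 0 < β) (hμ : 0 < μ) (hδ : 0 < δ)
    (hN : 0 < N) (hc : 0 < c)
    (hα0 : 0 < α) (hα1 : α ≤ 1)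
    (T0 : ℝ) (hT0 : T0 = lam ^ α / μ ^ α)
    (F V : Matrix (Fin 2) (Fin 2) ℝ)
    (hF : F = !![0, β ^ α * T0; 0, 0])
    (hV : V = !![δ ^ α, 0; -(N * δ ^ α), c ^ α]) :
    IsUnit V ∧
    spectralRadius ℝ (F * V⁻¹) = ENNReal.ofReal (β ^ α * lam ^ α * N / (μ ^ α * c ^ α)) := by
  have hδp : 0 < δ ^ α := Real.rpow_pos_of_pos hδ α
  have hcp : 0 < c ^ α := Real.rpow_pos_of_pos hc α
  have hμp : 0 < μ ^ α := Real.rpow_pos_of_pos hμ α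
  have hWV : V * !![1 / δ ^ α, 0; N / c ^ α, 1 / c ^ α] = 1 := by
    subst hV
    ext i j
    fin_cases i <;> fin_cases j <;>
      · simp [Matrix.mul_apply, Fin.sum_univ_two]
        try field_simp
        try ring
  have hVinv : V⁻¹ = !![1 / δ ^ α, 0; N / c ^ α, 1 / c ^ α] :=
    Matrix.inv_eq_right_inv hWV
  constructor
  · rw [Matrix.isUnit_iff_isUnit_det, hV, Matrix.det_fin_two_of, isUnit_iff_ne_zero]
    nlinarith
  · have hM : F * V⁻¹ =
        !![β ^ α * lam ^ α * N / (μ ^ α * c ^ α), β ^ α * lam ^ α / (μ ^ α * c ^ α); 0, 0] := by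
      rw [hVinv, hF, hT0]
      ext i j
      fin_cases i <;> fin_cases j <;>
        · simp [Matrix.mul_apply, Fin.sum_univ_two]
          try field_simp
          try ring
    rw [hM]
    exact spec_radius_tri _ _ (by positivity)
end

section
/- If R0 = β^α·λ^α·N/(μ^α·c^α) > 1, then the CTL response-free equilibrium X1 = (T1, I1, V1, C1) with T1 = c^α/(N·β^α), I1 = (N·β^α·λ^α − c^α·μ^α)/(N·β^α·δ^α), V1 = (N·β^α·λ^α − c^α·μ^α)/(β^α·c^α), C1 = 0 satisfies T1 > 0, I1 > 0, V1 > 0, and the model vector field F with proliferation function f1 vanishes at X1. -/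
/-- If `R0 = β^α·λ^α·N/(μ^α·c^α) > 1`, then the CTL response-free equilibrium
`X1 = (c^α/(N·β^α), (N·β^α·λ^α − c^α·μ^α)/(N·β^α·δ^α), (N·β^α·λ^α − c^α·μ^α)/(β^α·c^α), 0)`
has positive `T1, I1, V1` and the model vector field (with `f1(I,C) = q^α·I·C`)
vanishes at `X1`. -/
theorem CTL_response_free_equilibrium
    (lam β μ k δ N c q σ α : ℝ)
    (hlam : 0 < lam) (hβ : 0 < β) (hμ : 0 < μ) (hk : 0 < k) (hδ : 0 < δ)
    (hN : 0 < N) (hc : 0 < c) (hq : 0 < q) (hσ : 0 < σ)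
    (hα0 : 0 < α) (hα1 : α ≤ 1)
    (hR0 : β ^ α * lam ^ α * N / (μ ^ α * c ^ α) > 1)
    (T1 I1 V1 C1 : ℝ)
    (hT1 : T1 = c ^ α / (N * β ^ α))
    (hI1 : I1 = (N * β ^ α * lam ^ α - c ^ α * μ ^ α) / (N * β ^ α * δ ^ α))
    (hV1 : V1 = (N * β ^ α * lam ^ α - c ^ α * μ ^ α) / (β ^ α * c ^ α))
    (hC1 : C1 = 0) :
    0 < T1 ∧ 0 < I1 ∧ 0 < V1 ∧
    lam ^ α - β ^ α * V1 * T1 - μ ^ α * T1 = 0 ∧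
    β ^ α * V1 * T1 - k ^ α * I1 * C1 - δ ^ α * I1 = 0 ∧
    N * δ ^ α * I1 - c ^ α * V1 = 0 ∧
    q ^ α * I1 * C1 - σ ^ α * C1 = 0 := by
  have hβa : (0:ℝ) < β ^ α := Real.rpow_pos_of_pos hβ α
  have hla : (0:ℝ) < lam ^ α := Real.rpow_pos_of_pos hlam α
  have hμa : (0:ℝ) < μ ^ α := Real.rpow_pos_of_pos hμ α
  have hδa : (0:ℝ) < δ ^ α := Real.rpow_pos_of_pos hδ α
  have hca : (0:ℝ) < c ^ α := Real.rpow_pos_of_pos hc α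
  have hnum : 0 < N * β ^ α * lam ^ α - c ^ α * μ ^ α := by
    have := (one_lt_div (by positivity : (0:ℝ) < μ ^ α * c ^ α)).mp hR0
    nlinarith
  have hT : 0 < T1 := by rw [hT1]; positivity
  have hI : 0 < I1 := by rw [hI1]; positivity
  have hV : 0 < V1 := by rw [hV1]; positivity
  refine ⟨hT, hI, hV, ?_, ?_, ?_, ?_⟩ <;>
    subst hT1 hI1 hV1 hC1 <;> field_simp <;> ring
end

section
/- If R0 = β^α·λ^α·N/(μ^α·c^α) > φ0 = 1 + σ^α·N·β^α·δ^α/(q^α·c^α·μ^α), then the SARS-CoV-2 endemic equilibrium X2 = (T2, I2, V2, C2), where T2 = λ^α·c^α·q^α/(σ^α·N·β^α·δ^α + c^α·μ^α·q^α), I2 = σ^α/q^α, V2 = N·δ^α·σ^α/(q^α·c^α), and C2 = B·[q^α·(N·β^α·λ^α − c^α·μ^α) − σ^α·N·β^α·δ^α] with B = δ^α/((σ^α·N·β^α·δ^α + c^α·μ^α·q^α)·k^α), satisfies T2 > 0, I2 > 0, V2 > 0, C2 > 0, and the model vector field F with proliferation function f1 vanishes at X2. -/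
/-- If `R0 = β^α·λ^α·N/(μ^α·c^α) > φ0 = 1 + σ^α·N·β^α·δ^α/(q^α·c^α·μ^α)`,
then the endemic equilibrium `X2 = (T2, I2, V2, C2)` has all positive coordinates and the
model vector field (with `f1(I,C) = q^α·I·C`) vanishes at `X2`. -/
theorem endemic_equilibrium
    (lam β μ k δ N c q σ α : ℝ)
    (hlam : 0 < lam) (hβ : 0 < β) (hμ : 0 < μ) (hk : 0 < k) (hδ : 0 < δ)
    (hN : 0 < N) (hc : 0 < c) (hq : 0 < q) (hσ : 0 < σ)
    (hα0 : 0 < α) (hα1 : α ≤ 1)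
    (hR0 : β ^ α * lam ^ α * N / (μ ^ α * c ^ α) >
      1 + σ ^ α * N * β ^ α * δ ^ α / (q ^ α * c ^ α * μ ^ α))
    (T2 I2 V2 C2 B : ℝ)
    (hB : B = δ ^ α / ((σ ^ α * N * β ^ α * δ ^ α + c ^ α * μ ^ α * q ^ α) * k ^ α))
    (hT2 : T2 = lam ^ α * c ^ α * q ^ α / (σ ^ α * N * β ^ α * δ ^ α + c ^ α * μ ^ α * q ^ α))
    (hI2 : I2 = σ ^ α / q ^ α)
    (hV2 : V2 = N * δ ^ α * σ ^ α / (q ^ α * c ^ α))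
    (hC2 : C2 = B * (q ^ α * (N * β ^ α * lam ^ α - c ^ α * μ ^ α) - σ ^ α * N * β ^ α * δ ^ α)) :
    0 < T2 ∧ 0 < I2 ∧ 0 < V2 ∧ 0 < C2 ∧
    lam ^ α - β ^ α * V2 * T2 - μ ^ α * T2 = 0 ∧
    β ^ α * V2 * T2 - k ^ α * I2 * C2 - δ ^ α * I2 = 0 ∧
    N * δ ^ α * I2 - c ^ α * V2 = 0 ∧
    q ^ α * I2 * C2 - σ ^ α * C2 = 0 := by
  have hL : 0 < lam ^ α := Real.rpow_pos_of_pos hlam α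
  have hB' : 0 < β ^ α := Real.rpow_pos_of_pos hβ α
  have hM : 0 < μ ^ α := Real.rpow_pos_of_pos hμ α
  have hK : 0 < k ^ α := Real.rpow_pos_of_pos hk α
  have hD : 0 < δ ^ α := Real.rpow_pos_of_pos hδ α
  have hC' : 0 < c ^ α := Real.rpow_pos_of_pos hc α
  have hQ : 0 < q ^ α := Real.rpow_pos_of_pos hq α
  have hS : 0 < σ ^ α := Real.rpow_pos_of_pos hσ α
  have hDen : 0 < σ ^ α * N * β ^ α * δ ^ α + c ^ α * μ ^ α * q ^ α := by positivity
  -- key positivity from hR0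
  have hkey : 0 < q ^ α * (N * β ^ α * lam ^ α - c ^ α * μ ^ α) - σ ^ α * N * β ^ α * δ ^ α := by
    have h1 := mul_lt_mul_of_pos_right hR0 (show (0:ℝ) < q ^ α * c ^ α * μ ^ α by positivity)
    field_simp at h1
    have h2 : β ^ α * lam ^ α * N * (q ^ α * c ^ α * μ ^ α) / (μ ^ α * c ^ α)
        = β ^ α * lam ^ α * N * q ^ α := by
      field_simp
    nlinarith [h1]
  have hBpos : 0 < B := by rw [hB]; positivity
  have hC2pos : 0 < C2 := by rw [hC2]; exact mul_pos hBpos hkey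
  subst hC2 hV2 hI2 hT2 hB
  refine ⟨by positivity, by positivity, by positivity, hC2pos, ?_, ?_, ?_, ?_⟩ <;>
    field_simp <;> ring
end

section
/- Positive invariance in the integer-order case: let α = 1 and let T, I, V, C : [0,∞) → ℝ be differentiable functions satisfying T' = λ − β·V·T − μ·T, I' = β·V·T − k·I·C − δ·I, V' = N·δ·I − c·V, C' = q·I·C − σ·C on [0,∞), with T(0) ≥ 0, I(0) ≥ 0, V(0) ≥ 0, C(0) ≥ 0. Then T(t) ≥ 0, I(t) ≥ 0, V(t) ≥ 0 and C(t) ≥ 0 for all t ≥ 0. -/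
/-!
The vector field is locally Lipschitz and quasi-positive: its `i`-th component is nonnegative on
the face `{y ≥ 0, yᵢ = 0}` of the orthant. Comparing `F y` with `F (y ⊔ 0)`, a Lipschitz constant
`L` on the compact set swept out by the trajectory on `[0, τ]` gives `Fᵢ y ≥ L yᵢ` whenever
`yᵢ < 0` is the smallest coordinate of `y`. If some coordinate reached the barrier
`-ε e^{(L+1)(t-τ)}`, then at the first such time it would have to fall at least as fast as the
barrier, `xᵢ' ≤ (L+1) xᵢ < L xᵢ`, which is impossible; letting `ε → 0` gives `x τ ≥ 0`.
-/

open Set Filter Topology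

lemma HasDerivAt.nonpos_of_eventually_le_left {g : ℝ → ℝ} {d t : ℝ} (hg : HasDerivAt g d t)
    (hmin : ∀ᶠ u in 𝓝[<] t, g t ≤ g u) : d ≤ 0 := by
  have hcone : (-1 : ℝ) ∈ posTangentConeAt (Iio t) t :=
    mem_posTangentConeAt_of_frequently_mem <| Eventually.frequently <|
      eventually_nhdsWithin_of_forall fun s (hs : 0 < s) => by simpa using hs
  simpa using (show IsLocalMinOn g (Iio t) t from hmin).hasFDerivWithinAt_nonneg
    hg.hasDerivWithinAt.hasFDerivWithinAt hcone

lemma exists_first_zero {ι : Type*} [Finite ι] {f : ι → ℝ → ℝ} {a b : ℝ}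
    (hf : ∀ i, ContinuousOn (f i) (Icc a b)) (ha : ∀ i, 0 < f i a)
    (h : ∃ t ∈ Icc a b, ∃ i, f i t ≤ 0) :
    ∃ t ∈ Ioc a b, ∃ i, f i t = 0 ∧ (∀ j, 0 ≤ f j t) ∧ ∀ u ∈ Ico a t, ∀ j, 0 < f j u := by
  set A := ⋃ i, Icc a b ∩ f i ⁻¹' Iic 0
  have hA : IsCompact A := isCompact_iUnion fun i => isCompact_Icc.of_isClosed_subset
    ((hf i).preimage_isClosed_of_isClosed isClosed_Icc isClosed_Iic) inter_subset_left
  obtain ⟨t, ht, i, hfti⟩ := h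
  obtain ⟨t₀, ht₀A, ht₀least⟩ := hA.exists_isLeast ⟨t, mem_iUnion.2 ⟨i, ht, hfti⟩⟩
  obtain ⟨i₀, ht₀, hfi₀⟩ := mem_iUnion.1 ht₀A
  have hpos_before : ∀ u ∈ Ico a t₀, ∀ j, 0 < f j u := fun u hu j => not_le.1 fun hle =>
    hu.2.not_ge (ht₀least (mem_iUnion.2 ⟨j, ⟨hu.1, hu.2.le.trans ht₀.2⟩, hle⟩))
  have hat₀ : a < t₀ := ht₀.1.lt_of_ne fun hat => (ha i₀).not_ge (hat ▸ hfi₀)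
  have hnonneg : ∀ j, 0 ≤ f j t₀ := by
    intro j
    have hIcc : Icc a b ∈ 𝓝[<] t₀ :=
      mem_of_superset (Ioo_mem_nhdsLT hat₀) fun u hu => ⟨hu.1.le, hu.2.le.trans ht₀.2⟩
    refine ge_of_tendsto ((hf j t₀ ht₀).mono_of_mem_nhdsWithin hIcc).tendsto ?_
    filter_upwards [Ioo_mem_nhdsLT hat₀] with u hu
    exact (hpos_before u ⟨hu.1.le, hu.2⟩ j).le
  exact ⟨t₀, ⟨hat₀, ht₀.2⟩, i₀, le_antisymm hfi₀ (hnonneg i₀), hnonneg, hpos_before⟩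

section Barrier

variable {ι : Type*} [Fintype ι] {x x' : ℝ → ι → ℝ} {τ K : ℝ}

lemma neg_exp_lt_of_deriv_ge_mul_at_min
    (hx : ∀ t ∈ Icc 0 τ, HasDerivWithinAt x (x' t) (Ici 0) t) (h0 : 0 ≤ x 0)
    (hK : ∀ t ∈ Ioc 0 τ, ∀ i, x t i < 0 → (∀ j, x t i ≤ x t j) → K * x t i ≤ x' t i)
    {ε : ℝ} (hε : 0 < ε) : ∀ t ∈ Icc 0 τ, ∀ i, -(ε * Real.exp ((K + 1) * (t - τ))) < x t i := by
  set b : ℝ → ℝ := fun t => ε * Real.exp ((K + 1) * (t - τ))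
  have hb : ∀ t, HasDerivAt b ((K + 1) * b t) t := fun t =>
    ((((hasDerivAt_id t).sub_const τ).const_mul (K + 1)).exp.const_mul ε).congr_deriv
      (by simp only [b, id]; ring)
  by_contra! hhit
  have hcont : ∀ i, ContinuousOn (fun t => x t i + b t) (Icc 0 τ) := fun i t ht =>
    ((continuous_apply i).continuousAt.comp_continuousWithinAt
      ((hx t ht).continuousWithinAt.mono Icc_subset_Ici_self)).add
        (hb t).continuousAt.continuousWithinAt
  obtain ⟨t₀, ht₀, i, hzero, hmin, hbefore⟩ := exists_first_zero hcont
    (fun i => add_pos_of_nonneg_of_pos (h0 i) (by positivity))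
    (by obtain ⟨t, ht, i, hi⟩ := hhit; exact ⟨t, ht, i, by linarith⟩)
  have hderiv : HasDerivAt (fun t => x t i + b t) (x' t₀ i + (K + 1) * b t₀) t₀ :=
    (hasDerivAt_pi.1 ((hx t₀ (Ioc_subset_Icc_self ht₀)).hasDerivAt
      (Ici_mem_nhds ht₀.1)) i).add (hb t₀)
  have hslope : x' t₀ i + (K + 1) * b t₀ ≤ 0 := hderiv.nonpos_of_eventually_le_left <| by
    filter_upwards [Ioo_mem_nhdsLT ht₀.1] with u hu
    exact hzero.le.trans (hbefore u ⟨hu.1.le, hu.2⟩ i).le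
  have hneg : x t₀ i < 0 := by linarith [show 0 < b t₀ by positivity]
  have hb₀ : b t₀ = -x t₀ i := by linarith
  have := hK t₀ ht₀ i hneg fun j => by linarith [hmin j]
  rw [hb₀] at hslope
  linarith

lemma nonneg_of_deriv_ge_mul_at_min (hτ : 0 ≤ τ)
    (hx : ∀ t ∈ Icc 0 τ, HasDerivWithinAt x (x' t) (Ici 0) t) (h0 : 0 ≤ x 0)
    (hK : ∀ t ∈ Ioc 0 τ, ∀ i, x t i < 0 → (∀ j, x t i ≤ x t j) → K * x t i ≤ x' t i) :
    0 ≤ x τ := fun i => show (0 : ℝ) ≤ x τ i from le_of_forall_pos_lt_add fun ε hε => by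
  have := neg_exp_lt_of_deriv_ge_mul_at_min hx h0 hK hε τ ⟨hτ, le_rfl⟩ i
  rw [sub_self, mul_zero, Real.exp_zero, mul_one] at this
  linarith

end Barrier

lemma norm_sub_sup_zero_le {ι : Type*} [Fintype ι] {y : ι → ℝ} {i : ι} (hi : ∀ j, y i ≤ y j)
    (hneg : y i ≤ 0) : ‖y - y ⊔ 0‖ ≤ -y i := by
  refine (pi_norm_le_iff_of_nonneg (by linarith)).2 fun j => ?_
  rw [Pi.sub_apply, Pi.sup_apply, Pi.zero_apply, Real.norm_eq_abs, abs_le]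
  rcases le_total (y j) 0 with h | h
  · rw [sup_of_le_right h]; constructor <;> linarith [hi j]
  · rw [sup_of_le_left h]; constructor <;> linarith

def QuasiPositive {ι : Type*} (F : (ι → ℝ) → ι → ℝ) : Prop :=
  ∀ y, 0 ≤ y → ∀ i, y i = 0 → 0 ≤ F y i

namespace QuasiPositive

variable {ι : Type*} [Fintype ι] {F : (ι → ℝ) → ι → ℝ}

lemma mul_le_apply_of_lipschitzOnWith (hF : QuasiPositive F) {L : NNReal} {s : Set (ι → ℝ)}
    (hL : LipschitzOnWith L F s) {y : ι → ℝ} (hy : y ∈ s) (hy' : y ⊔ 0 ∈ s) {i : ι}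
    (hi : ∀ j, y i ≤ y j) (hneg : y i ≤ 0) : L * y i ≤ F y i := by
  have hproj : 0 ≤ F (y ⊔ 0) i := hF _ le_sup_right i (by simpa using hneg)
  have hdist : |F y i - F (y ⊔ 0) i| ≤ L * -y i :=
    calc |F y i - F (y ⊔ 0) i| ≤ ‖F y - F (y ⊔ 0)‖ := norm_le_pi_norm (F y - F (y ⊔ 0)) i
      _ ≤ L * ‖y - y ⊔ 0‖ := hL.norm_sub_le hy hy'
      _ ≤ L * -y i := mul_le_mul_of_nonneg_left (norm_sub_sup_zero_le hi hneg) L.2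
  linarith [neg_abs_le (F y i - F (y ⊔ 0) i)]

theorem nonneg_of_hasDerivWithinAt (hF : QuasiPositive F) (hF' : LocallyLipschitz F)
    {x : ℝ → ι → ℝ} (hx : ∀ t ≥ 0, HasDerivWithinAt x (F (x t)) (Ici 0) t) (h0 : 0 ≤ x 0)
    {τ : ℝ} (hτ : 0 ≤ τ) : 0 ≤ x τ := by
  have hcont : ContinuousOn x (Icc 0 τ) := fun t ht =>
    (hx t ht.1).continuousWithinAt.mono Icc_subset_Ici_self
  obtain ⟨L, hL⟩ := hF'.locallyLipschitzOn.exists_lipschitzOnWith_of_compact <|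
    (isCompact_Icc.image_of_continuousOn hcont).union
      (isCompact_Icc.image_of_continuousOn (continuousOn_pi.2 fun i =>
        ((continuous_apply i).comp_continuousOn hcont).sup continuousOn_const))
  refine nonneg_of_deriv_ge_mul_at_min hτ (fun t ht => hx t ht.1) h0 fun t ht i hneg hi =>
    hF.mul_le_apply_of_lipschitzOnWith hL ?_ ?_ hi hneg.le
  · exact Or.inl (mem_image_of_mem _ (Ioc_subset_Icc_self ht))
  · exact Or.inr (mem_image_of_mem (fun t => x t ⊔ 0) (Ioc_subset_Icc_self ht))

end QuasiPositive

/-- Coordinates `(y 0, y 1, y 2, y 3) = (T, I, V, C)`. -/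
def withinHostField (lam β μ k δ N c q σ : ℝ) (y : Fin 4 → ℝ) : Fin 4 → ℝ :=
  ![lam - β * y 2 * y 0 - μ * y 0, β * y 2 * y 0 - k * y 1 * y 3 - δ * y 1,
    N * δ * y 1 - c * y 2, q * y 1 * y 3 - σ * y 3]

section WithinHost

variable {lam β μ k δ N c q σ : ℝ}

lemma withinHostField_quasiPositive (hlam : 0 ≤ lam) (hβ : 0 ≤ β) (hNδ : 0 ≤ N * δ) :
    QuasiPositive (withinHostField lam β μ k δ N c q σ) := by
  intro y hy i hi
  fin_cases i <;> simp only [withinHostField, Fin.zero_eta, Fin.mk_one, Fin.reduceFinMk,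
    Matrix.cons_val] at hi ⊢ <;> rw [hi]
  · simpa using hlam
  · simpa using mul_nonneg (mul_nonneg hβ (hy 2)) (hy 0)
  · simpa using mul_nonneg hNδ (hy 1)
  · simp

lemma withinHostField_locallyLipschitz :
    LocallyLipschitz (withinHostField lam β μ k δ N c q σ) := by
  refine ContDiff.locallyLipschitz (𝕂 := ℝ) (contDiff_pi.2 fun i => ?_)
  fin_cases i <;> simp [withinHostField] <;> fun_prop

end WithinHost

theorem positive_invariance_integer_order_general
    (lam β μ k δ N c q σ : ℝ)
    (hlam : 0 < lam) (hβ : 0 < β) (hδ : 0 < δ)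
    (hN : 0 < N)
    (T I V C : ℝ → ℝ)
    (hT : ∀ t ∈ Set.Ici (0 : ℝ),
      HasDerivWithinAt T (lam - β * V t * T t - μ * T t) (Set.Ici 0) t)
    (hI : ∀ t ∈ Set.Ici (0 : ℝ),
      HasDerivWithinAt I (β * V t * T t - k * I t * C t - δ * I t) (Set.Ici 0) t)
    (hV : ∀ t ∈ Set.Ici (0 : ℝ),
      HasDerivWithinAt V (N * δ * I t - c * V t) (Set.Ici 0) t)
    (hC : ∀ t ∈ Set.Ici (0 : ℝ),
      HasDerivWithinAt C (q * I t * C t - σ * C t) (Set.Ici 0) t)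
    (hT0 : 0 ≤ T 0) (hI0 : 0 ≤ I 0) (hV0 : 0 ≤ V 0) (hC0 : 0 ≤ C 0) :
    ∀ t ≥ (0 : ℝ), 0 ≤ T t ∧ 0 ≤ I t ∧ 0 ≤ V t ∧ 0 ≤ C t := by
  intro t ht
  have hx : ∀ u ≥ 0, HasDerivWithinAt (fun u => ![T u, I u, V u, C u])
      (withinHostField lam β μ k δ N c q σ ![T u, I u, V u, C u]) (Ici 0) u := fun u hu => by
    refine hasDerivWithinAt_pi.2 fun i => ?_
    fin_cases i
    exacts [hT u hu, hI u hu, hV u hu, hC u hu]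
  have h0 : 0 ≤ ![T 0, I 0, V 0, C 0] := fun i => by fin_cases i <;> assumption
  have hquasi : QuasiPositive (withinHostField lam β μ k δ N c q σ) :=
    withinHostField_quasiPositive hlam.le hβ.le (mul_pos hN hδ).le
  have h := hquasi.nonneg_of_hasDerivWithinAt withinHostField_locallyLipschitz hx h0 ht
  exact ⟨h 0, h 1, h 2, h 3⟩

/-- Positive invariance, integer-order case `α = 1`:
if `T, I, V, C : [0,∞) → ℝ` are differentiable and satisfy
`T' = λ − β·V·T − μ·T`, `I' = β·V·T − k·I·C − δ·I`, `V' = N·δ·I − c·V`,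
`C' = q·I·C − σ·C` on `[0,∞)` with nonnegative initial data, then
`T, I, V, C` remain nonnegative for all `t ≥ 0`. -/
theorem positive_invariance_integer_order
    (lam β μ k δ N c q σ : ℝ)
    (hlam : 0 < lam) (hβ : 0 < β) (hμ : 0 < μ) (hk : 0 < k) (hδ : 0 < δ)
    (hN : 0 < N) (hc : 0 < c) (hq : 0 < q) (hσ : 0 < σ)
    (T I V C : ℝ → ℝ)
    (hT : ∀ t ∈ Set.Ici (0 : ℝ),
      HasDerivWithinAt T (lam - β * V t * T t - μ * T t) (Set.Ici 0) t)
    (hI : ∀ t ∈ Set.Ici (0 : ℝ),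
      HasDerivWithinAt I (β * V t * T t - k * I t * C t - δ * I t) (Set.Ici 0) t)
    (hV : ∀ t ∈ Set.Ici (0 : ℝ),
      HasDerivWithinAt V (N * δ * I t - c * V t) (Set.Ici 0) t)
    (hC : ∀ t ∈ Set.Ici (0 : ℝ),
      HasDerivWithinAt C (q * I t * C t - σ * C t) (Set.Ici 0) t)
    (hT0 : 0 ≤ T 0) (hI0 : 0 ≤ I 0) (hV0 : 0 ≤ V 0) (hC0 : 0 ≤ C 0) :
    ∀ t ≥ (0 : ℝ), 0 ≤ T t ∧ 0 ≤ I t ∧ 0 ≤ V t ∧ 0 ≤ C t :=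
  positive_invariance_integer_order_general lam β μ k δ N c q σ hlam hβ hδ hN T I V C hT hI hV hC
    hT0 hI0 hV0 hC0
end

section
/- Positive invariance in the fractional case: let 0 < α < 1 and let T, I, V, C : [0,∞) → ℝ be continuously differentiable functions whose Caputo fractional derivatives of order α with base point 0 satisfy, for all t > 0, (D_0^α T)(t) = λ^α − β^α·V(t)·T(t) − μ^α·T(t), (D_0^α I)(t) = β^α·V(t)·T(t) − k^α·I(t)·C(t) − δ^α·I(t), (D_0^α V)(t) = N·δ^α·I(t) − c^α·V(t), (D_0^α C)(t) = q^α·I(t)·C(t) − σ^α·C(t), with T(0) ≥ 0, I(0) ≥ 0, V(0) ≥ 0, C(0) ≥ 0. Then T(t) ≥ 0, I(t) ≥ 0, V(t) ≥ 0 and C(t) ≥ 0 for all t ≥ 0. -/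
/-- The Caputo fractional derivative of order `α` with base point `a`:
`(D_a^α y)(x) = (1/Γ(1−α)) · ∫_a^x (x−t)^{−α} y'(t) dt`. -/
noncomputable def caputoDeriv (α a : ℝ) (y : ℝ → ℝ) (x : ℝ) : ℝ :=
  (1 / Real.Gamma (1 - α)) * ∫ t in a..x, (x - t) ^ (-α) * deriv y t

open Set MeasureTheory intervalIntegral Filter Topology

lemma caputo_min_bound (α : ℝ) (hα0 : 0 < α) (hα1 : α < 1)
    (y : ℝ → ℝ) (hy : ContDiffOn ℝ 1 y (Set.Ici 0))
    (tstar ρ : ℝ) (hts : 0 ≤ tstar) (hlt : tstar < ρ)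
    (hmin : ∀ s ∈ Set.Icc (0:ℝ) ρ, y ρ ≤ y s)
    (hpos : ∀ s ∈ Set.Icc (0:ℝ) tstar, 0 ≤ y s) :
    caputoDeriv α 0 y ρ ≤ y ρ * (ρ - tstar) ^ (-α) / Real.Gamma (1 - α) := by
  have hΓ : 0 < Real.Gamma (1 - α) := Real.Gamma_pos_of_pos (by linarith)
  have hρ : 0 < ρ := lt_of_le_of_lt hts hlt
  set g0 : ℝ → ℝ := derivWithin y (Set.Ici 0) with hg0def
  have hg0cont : ContinuousOn g0 (Set.Ici 0) :=
    hy.continuousOn_derivWithin (uniqueDiffOn_Ici 0) le_rfl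
  have hderivAt : ∀ s : ℝ, 0 < s → HasDerivAt y (g0 s) s := by
    intro s hs
    have hmem : Set.Ici (0:ℝ) ∈ 𝓝 s := Ici_mem_nhds hs
    have h1 : DifferentiableAt ℝ y s :=
      (hy.contDiffAt hmem).differentiableAt one_ne_zero
    have h2 : g0 s = deriv y s := derivWithin_of_mem_nhds hmem
    rw [h2]; exact h1.hasDerivAt
  have hycont : ContinuousOn y (Set.Ici 0) := hy.continuousOn
  have hdw : ∀ s ∈ Set.Icc (0:ℝ) ρ, HasDerivWithinAt y (g0 s) (Set.Icc 0 ρ) s := by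
    intro s hs
    exact ((hy.differentiableOn one_ne_zero s hs.1).hasDerivWithinAt).mono Icc_subset_Ici_self
  obtain ⟨L, hL⟩ := (isCompact_Icc : IsCompact (Set.Icc (0:ℝ) ρ)).exists_bound_of_continuousOn
      (hg0cont.mono Icc_subset_Ici_self)
  have hL0 : 0 ≤ L := le_trans (norm_nonneg _) (hL 0 ⟨le_rfl, hρ.le⟩)
  have hyLip : ∀ b ∈ Set.Icc (0:ℝ) ρ, |y b - y ρ| ≤ L * (ρ - b) := by
    intro b hb
    have := Convex.norm_image_sub_le_of_norm_hasDerivWithin_le hdw hL (convex_Icc _ _)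
      (Set.right_mem_Icc.2 hρ.le) hb
    rwa [Real.norm_eq_abs, Real.norm_eq_abs, abs_sub_comm b ρ, abs_of_nonneg (sub_nonneg.2 hb.2)] at this
  have hwint : ∀ u v : ℝ, IntervalIntegrable (fun s => (ρ - s) ^ (-α)) volume u v := by
    intro u v
    have h := (intervalIntegrable_rpow' (by linarith : (-1:ℝ) < -α)
      (a := ρ - u) (b := ρ - v)).comp_sub_left ρ
    simpa using h
  have hI1 : IntervalIntegrable (fun s => (ρ - s) ^ (-α) * g0 s) volume 0 ρ := by
    refine (hwint 0 ρ).mul_continuousOn (hg0cont.mono ?_)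
    rw [uIcc_of_le hρ.le]; exact Icc_subset_Ici_self
  have hkernel : ∀ x : ℝ, x < ρ →
      HasDerivAt (fun s : ℝ => (ρ - s) ^ (-α)) (α * (ρ - x) ^ (-α - 1)) x := by
    intro x hx
    have hbase : HasDerivAt (fun s : ℝ => ρ - s) (-1) x := by
      simpa using (hasDerivAt_id x).const_sub ρ
    have h := hbase.rpow_const (p := -α) (Or.inl (ne_of_gt (by linarith : (0:ℝ) < ρ - x)))
    convert h using 1
    ring
  have key : ∀ b, tstar ≤ b → b < ρ →
      (∫ s in (0:ℝ)..ρ, (ρ - s) ^ (-α) * g0 s)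
        ≤ y ρ * (ρ - tstar) ^ (-α) + (L + L / (1 - α)) * (ρ - b) ^ (1 - α) := by
    intro b hb1 hb2
    have hb0 : (0:ℝ) ≤ b := hts.trans hb1
    have hρb : (0:ℝ) < ρ - b := by linarith
    have hIccb : Set.Icc (0:ℝ) b ⊆ Set.Ici 0 := Icc_subset_Ici_self
    have hccont : ∀ p : ℝ, ContinuousOn (fun s : ℝ => (ρ - s) ^ p) (Set.Icc 0 b) := by
      intro p
      apply ContinuousOn.rpow_const ((continuous_const.sub continuous_id).continuousOn)
      intro s hs
      exact Or.inl (ne_of_gt (by linarith [hs.2] : (0:ℝ) < ρ - s))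
    have hycontb : ContinuousOn (fun s => y s - y ρ) (Set.Icc 0 b) :=
      (hycont.mono hIccb).sub continuousOn_const
    set F : ℝ → ℝ := fun s => (ρ - s) ^ (-α) * (y s - y ρ) with hFdef
    set G1 : ℝ → ℝ := fun s => α * (ρ - s) ^ (-α - 1) * (y s - y ρ) with hG1def
    set G2 : ℝ → ℝ := fun s => (ρ - s) ^ (-α) * g0 s with hG2def
    have hG1cont : ContinuousOn G1 (Set.Icc 0 b) :=
      (continuousOn_const.mul (hccont _)).mul hycontb
    have hG2cont : ContinuousOn G2 (Set.Icc 0 b) := (hccont _).mul (hg0cont.mono hIccb)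
    have hG1int : IntervalIntegrable G1 volume 0 b := by
      apply ContinuousOn.intervalIntegrable
      rw [uIcc_of_le hb0]; exact hG1cont
    have hG2int : IntervalIntegrable G2 volume 0 b := by
      apply ContinuousOn.intervalIntegrable
      rw [uIcc_of_le hb0]; exact hG2cont
    have hFcont : ContinuousOn F (Set.Icc 0 b) := (hccont _).mul hycontb
    have hFderiv : ∀ x ∈ Set.Ioo (0:ℝ) b, HasDerivAt F (G1 x + G2 x) x := by
      intro x hx
      have h1 := hkernel x (by linarith [hx.2])
      have h2 : HasDerivAt (fun s => y s - y ρ) (g0 x) x := (hderivAt x hx.1).sub_const _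
      have h3 := h1.mul h2
      convert h3 using 1
      all_goals rfl
    have hFTC : ∫ s in (0:ℝ)..b, (G1 s + G2 s) = F b - F 0 :=
      integral_eq_sub_of_hasDeriv_right_of_le hb0 hFcont
        (fun x hx => (hFderiv x hx).hasDerivWithinAt) (hG1int.add hG2int)
    have hsplit : ∫ s in (0:ℝ)..b, (G1 s + G2 s)
        = (∫ s in (0:ℝ)..b, G1 s) + ∫ s in (0:ℝ)..b, G2 s :=
      integral_add hG1int hG2int
    -- lower bound on ∫ G1 over [tstar, b]
    have hG1inttb : IntervalIntegrable G1 volume tstar b := by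
      apply ContinuousOn.intervalIntegrable
      rw [uIcc_of_le hb1]
      exact hG1cont.mono (Icc_subset_Icc hts le_rfl)
    have hG1intt : IntervalIntegrable G1 volume 0 tstar := by
      apply ContinuousOn.intervalIntegrable
      rw [uIcc_of_le hts]
      exact hG1cont.mono (Icc_subset_Icc le_rfl hb1)
    have hG1tail : 0 ≤ ∫ s in tstar..b, G1 s := by
      apply intervalIntegral.integral_nonneg hb1
      intro s hs
      have hys : y ρ ≤ y s := hmin s ⟨hts.trans hs.1, le_of_lt (lt_of_le_of_lt hs.2 hb2)⟩
      have hw : (0:ℝ) ≤ α * (ρ - s) ^ (-α - 1) :=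
        mul_nonneg hα0.le (Real.rpow_nonneg (by linarith [hs.2]) _)
      exact mul_nonneg hw (by linarith)
    have hAcomp : (∫ s in (0:ℝ)..tstar, α * (ρ - s) ^ (-α - 1))
        = (ρ - tstar) ^ (-α) - ρ ^ (-α) := by
      have hder : ∀ x ∈ Set.uIcc (0:ℝ) tstar, HasDerivAt (fun s : ℝ => (ρ - s) ^ (-α))
          (α * (ρ - x) ^ (-α - 1)) x := by
        intro x hx
        rw [uIcc_of_le hts] at hx
        exact hkernel x (by linarith [hx.2])
      have hint : IntervalIntegrable (fun s : ℝ => α * (ρ - s) ^ (-α - 1)) volume 0 tstar := by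
        apply ContinuousOn.intervalIntegrable
        apply continuousOn_const.mul
        apply ContinuousOn.rpow_const ((continuous_const.sub continuous_id).continuousOn)
        intro s hs
        rw [uIcc_of_le hts] at hs
        exact Or.inl (ne_of_gt (by linarith [hs.2] : (0:ℝ) < ρ - s))
      rw [integral_eq_sub_of_hasDerivAt hder hint]
      simp
    have hG1head : (0 - y ρ) * ((ρ - tstar) ^ (-α) - ρ ^ (-α)) ≤ ∫ s in (0:ℝ)..tstar, G1 s := by
      have hint : IntervalIntegrable (fun s : ℝ => α * (ρ - s) ^ (-α - 1)) volume 0 tstar := by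
        apply ContinuousOn.intervalIntegrable
        apply continuousOn_const.mul
        apply ContinuousOn.rpow_const ((continuous_const.sub continuous_id).continuousOn)
        intro s hs
        rw [uIcc_of_le hts] at hs
        exact Or.inl (ne_of_gt (by linarith [hs.2] : (0:ℝ) < ρ - s))
      have heq : (0 - y ρ) * ((ρ - tstar) ^ (-α) - ρ ^ (-α))
          = ∫ s in (0:ℝ)..tstar, (α * (ρ - s) ^ (-α - 1)) * (0 - y ρ) := by
        rw [intervalIntegral.integral_mul_const, hAcomp]; ring
      rw [heq]
      apply intervalIntegral.integral_mono_on hts (hint.mul_const _) hG1intt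
      intro s hs
      have h0s : 0 ≤ y s := hpos s hs
      have hw : (0:ℝ) ≤ α * (ρ - s) ^ (-α - 1) :=
        mul_nonneg hα0.le (Real.rpow_nonneg (by linarith [hs.2]) _)
      exact mul_le_mul_of_nonneg_left (by linarith) hw
    have hG1adj : (∫ s in (0:ℝ)..b, G1 s)
        = (∫ s in (0:ℝ)..tstar, G1 s) + ∫ s in tstar..b, G1 s :=
      (integral_add_adjacent_intervals hG1intt hG1inttb).symm
    -- F b and F 0 bounds
    have hpow : (ρ - b) ^ ((1:ℝ) - α) = (ρ - b) ^ (-α) * (ρ - b) := by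
      rw [show (1:ℝ) - α = -α + 1 by ring, Real.rpow_add hρb, Real.rpow_one]
    have hFb : F b ≤ L * (ρ - b) ^ ((1:ℝ) - α) := by
      have h1 : y b - y ρ ≤ L * (ρ - b) := le_trans (le_abs_self _) (hyLip b ⟨hb0, hb2.le⟩)
      have h2 : F b ≤ (ρ - b) ^ (-α) * (L * (ρ - b)) :=
        mul_le_mul_of_nonneg_left h1 (Real.rpow_nonneg hρb.le _)
      calc F b ≤ (ρ - b) ^ (-α) * (L * (ρ - b)) := h2
        _ = L * (ρ - b) ^ ((1:ℝ) - α) := by rw [hpow]; ring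
    have hy0 : 0 ≤ y 0 := hpos 0 ⟨le_rfl, hts⟩
    have hF0 : -(F 0) ≤ ρ ^ (-α) * y ρ := by
      have : F 0 = ρ ^ (-α) * (y 0 - y ρ) := by simp [hFdef]
      rw [this]
      have hρα : (0:ℝ) ≤ ρ ^ (-α) := Real.rpow_nonneg hρ.le _
      nlinarith
    -- tail integral
    have hG2intρ : IntervalIntegrable G2 volume b ρ := by
      refine (hwint b ρ).mul_continuousOn (hg0cont.mono ?_)
      rw [uIcc_of_le hb2.le]
      exact fun x hx => hb0.trans hx.1
    have hWval : (∫ s in b..ρ, (ρ - s) ^ (-α)) = (ρ - b) ^ ((1:ℝ) - α) / (1 - α) := by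
      rw [show (fun s : ℝ => (ρ - s) ^ (-α)) = (fun s : ℝ => (fun x : ℝ => x ^ (-α)) (ρ - s)) from rfl]
      rw [intervalIntegral.integral_comp_sub_left (fun x : ℝ => x ^ (-α)) ρ]
      rw [integral_rpow (Or.inl (by linarith : (-1:ℝ) < -α))]
      rw [sub_self, Real.zero_rpow (by linarith : -α + 1 ≠ 0)]
      rw [show -α + 1 = (1:ℝ) - α by ring, sub_zero]
    have hJ3 : (∫ s in b..ρ, G2 s) ≤ L / (1 - α) * (ρ - b) ^ ((1:ℝ) - α) := by
      have h1 : (∫ s in b..ρ, G2 s) ≤ ∫ s in b..ρ, (ρ - s) ^ (-α) * L := by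
        apply intervalIntegral.integral_mono_on hb2.le hG2intρ ((hwint b ρ).mul_const L)
        intro s hs
        have hg : g0 s ≤ L := le_trans (le_abs_self _) (by simpa using hL s ⟨hb0.trans hs.1, hs.2⟩)
        exact mul_le_mul_of_nonneg_left hg (Real.rpow_nonneg (by linarith [hs.2]) _)
      rw [intervalIntegral.integral_mul_const, hWval] at h1
      calc (∫ s in b..ρ, G2 s) ≤ (ρ - b) ^ ((1:ℝ) - α) / (1 - α) * L := h1
        _ = L / (1 - α) * (ρ - b) ^ ((1:ℝ) - α) := by ring
    have hG2adj : (∫ s in (0:ℝ)..ρ, G2 s)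
        = (∫ s in (0:ℝ)..b, G2 s) + ∫ s in b..ρ, G2 s :=
      (integral_add_adjacent_intervals hG2int hG2intρ).symm
    have hG2b : (∫ s in (0:ℝ)..b, G2 s)
        ≤ F b - F 0 - ((0 - y ρ) * ((ρ - tstar) ^ (-α) - ρ ^ (-α))) := by
      have := hFTC
      rw [hsplit] at this
      have hlow : (0 - y ρ) * ((ρ - tstar) ^ (-α) - ρ ^ (-α)) ≤ ∫ s in (0:ℝ)..b, G1 s := by
        rw [hG1adj]; linarith
      linarith
    rw [hG2adj]
    have hfb := hFb
    have hf0 := hF0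
    nlinarith [hJ3, hG2b]
  have hlim : Tendsto (fun b : ℝ => (L + L / (1 - α)) * (ρ - b) ^ ((1:ℝ) - α)) (𝓝[<] ρ) (𝓝 0) := by
    have hc : Continuous (fun b : ℝ => (ρ - b) ^ ((1:ℝ) - α)) :=
      (continuous_const.sub continuous_id).rpow_const (fun x => Or.inr (by linarith))
    have h1 := hc.tendsto ρ
    rw [sub_self, Real.zero_rpow (by linarith : (1:ℝ) - α ≠ 0)] at h1
    have h2 : Tendsto (fun b : ℝ => (L + L / (1 - α)) * (ρ - b) ^ ((1:ℝ) - α)) (𝓝[<] ρ) (𝓝 ((L + L / (1 - α)) * 0)) :=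
      (h1.const_mul (L + L / (1 - α))).mono_left (nhdsWithin_le_nhds : 𝓝[Set.Iio ρ] ρ ≤ 𝓝 ρ)
    simpa using h2
  have hfinal : (∫ s in (0:ℝ)..ρ, (ρ - s) ^ (-α) * g0 s) ≤ y ρ * (ρ - tstar) ^ (-α) := by
    have hev : ∀ᶠ b in 𝓝[<] ρ,
        (∫ s in (0:ℝ)..ρ, (ρ - s) ^ (-α) * g0 s) - y ρ * (ρ - tstar) ^ (-α)
          ≤ (L + L / (1 - α)) * (ρ - b) ^ ((1:ℝ) - α) := by
      filter_upwards [Ioo_mem_nhdsLT_of_mem (Set.mem_Ioc.mpr ⟨hlt, le_rfl⟩)] with b hb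
      have := key b hb.1.le hb.2
      linarith
    have := ge_of_tendsto hlim hev
    linarith
  have hae : (∫ s in (0:ℝ)..ρ, (ρ - s) ^ (-α) * deriv y s)
      = ∫ s in (0:ℝ)..ρ, (ρ - s) ^ (-α) * g0 s := by
    apply intervalIntegral.integral_congr_ae
    apply Filter.Eventually.of_forall
    intro s hs
    rw [Set.uIoc_of_le hρ.le] at hs
    rw [hg0def, derivWithin_of_mem_nhds (Ici_mem_nhds hs.1)]
  rw [caputoDeriv, hae]
  have hpos1 : (0:ℝ) < 1 / Real.Gamma (1 - α) := by positivity
  have hmul := mul_le_mul_of_nonneg_left hfinal hpos1.le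
  have h2 : (1 / Real.Gamma (1 - α)) * (y ρ * (ρ - tstar) ^ (-α))
      = y ρ * (ρ - tstar) ^ (-α) / Real.Gamma (1 - α) := by ring
  linarith

lemma prod_ge {m B v t : ℝ} (hm : m ≤ 0) (hB : 0 ≤ B) (hv1 : m ≤ v) (hv2 : v ≤ B)
    (ht1 : m ≤ t) (ht2 : t ≤ B) : B * m ≤ v * t := by
  rcases le_or_gt 0 t with h | h
  · nlinarith
  · nlinarith

set_option maxHeartbeats 1000000 in
/-- Positive invariance, fractional case `0 < α < 1`:
if `T, I, V, C : [0,∞) → ℝ` are continuously differentiable and their Caputo fractional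
derivatives of order `α` with base point `0` satisfy the within-host SARS-CoV-2 model
(with CTL proliferation function `f1(I,C) = q^α·I·C`) for all `t > 0`, with nonnegative
initial data, then `T, I, V, C` remain nonnegative for all `t ≥ 0`. -/
theorem positive_invariance_fractional_order
    (lam β μ k δ N c q σ α : ℝ)
    (hlam : 0 < lam) (hβ : 0 < β) (hμ : 0 < μ) (hk : 0 < k) (hδ : 0 < δ)
    (hN : 0 < N) (hc : 0 < c) (hq : 0 < q) (hσ : 0 < σ)
    (hα0 : 0 < α) (hα1 : α < 1)
    (T I V C : ℝ → ℝ)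
    (hTcd : ContDiffOn ℝ 1 T (Set.Ici 0)) (hIcd : ContDiffOn ℝ 1 I (Set.Ici 0))
    (hVcd : ContDiffOn ℝ 1 V (Set.Ici 0)) (hCcd : ContDiffOn ℝ 1 C (Set.Ici 0))
    (hT : ∀ t > (0 : ℝ),
      caputoDeriv α 0 T t = lam ^ α - β ^ α * V t * T t - μ ^ α * T t)
    (hI : ∀ t > (0 : ℝ),
      caputoDeriv α 0 I t = β ^ α * V t * T t - k ^ α * I t * C t - δ ^ α * I t)
    (hV : ∀ t > (0 : ℝ),
      caputoDeriv α 0 V t = N * δ ^ α * I t - c ^ α * V t)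
    (hC : ∀ t > (0 : ℝ),
      caputoDeriv α 0 C t = q ^ α * I t * C t - σ ^ α * C t)
    (hT0 : 0 ≤ T 0) (hI0 : 0 ≤ I 0) (hV0 : 0 ≤ V 0) (hC0 : 0 ≤ C 0) :
    ∀ t ≥ (0 : ℝ), 0 ≤ T t ∧ 0 ≤ I t ∧ 0 ≤ V t ∧ 0 ≤ C t := by
  intro τ hτ0
  by_contra hcon
  set g : ℝ → ℝ := fun t => min (min (T t) (I t)) (min (V t) (C t)) with hgdef
  have hgle : ∀ t, g t ≤ T t ∧ g t ≤ I t ∧ g t ≤ V t ∧ g t ≤ C t := by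
    intro t
    exact ⟨le_trans (min_le_left _ _) (min_le_left _ _),
      le_trans (min_le_left _ _) (min_le_right _ _),
      le_trans (min_le_right _ _) (min_le_left _ _),
      le_trans (min_le_right _ _) (min_le_right _ _)⟩
  have hg0init : 0 ≤ g 0 := le_min (le_min hT0 hI0) (le_min hV0 hC0)
  have hgτ : g τ < 0 := by
    by_contra h
    push_neg at h
    exact hcon ⟨le_trans h (hgle τ).1, le_trans h (hgle τ).2.1,
      le_trans h (hgle τ).2.2.1, le_trans h (hgle τ).2.2.2⟩
  have hτpos : 0 < τ := by
    rcases lt_or_eq_of_le hτ0 with h | h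
    · exact h
    · exfalso; rw [← h] at hgτ; linarith
  have hsubτ : Set.Icc (0:ℝ) τ ⊆ Set.Ici 0 := Set.Icc_subset_Ici_self
  have hgc : ContinuousOn g (Set.Icc 0 τ) :=
    ((hTcd.continuousOn.mono hsubτ).inf (hIcd.continuousOn.mono hsubτ)).inf
      ((hVcd.continuousOn.mono hsubτ).inf (hCcd.continuousOn.mono hsubτ))
  obtain ⟨B1, hB1⟩ := isCompact_Icc.exists_bound_of_continuousOn (hTcd.continuousOn.mono hsubτ)
  obtain ⟨B2, hB2⟩ := isCompact_Icc.exists_bound_of_continuousOn (hIcd.continuousOn.mono hsubτ)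
  obtain ⟨B3, hB3⟩ := isCompact_Icc.exists_bound_of_continuousOn (hVcd.continuousOn.mono hsubτ)
  obtain ⟨B4, hB4⟩ := isCompact_Icc.exists_bound_of_continuousOn (hCcd.continuousOn.mono hsubτ)
  set B := max (max B1 B2) (max B3 B4) with hBdef
  have hBT : ∀ x ∈ Set.Icc (0:ℝ) τ, |T x| ≤ B := fun x hx => le_trans
    (by simpa using hB1 x hx) (le_trans (le_max_left _ _) (le_max_left _ _))
  have hBI : ∀ x ∈ Set.Icc (0:ℝ) τ, |I x| ≤ B := fun x hx => le_trans
    (by simpa using hB2 x hx) (le_trans (le_max_right _ _) (le_max_left _ _))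
  have hBV : ∀ x ∈ Set.Icc (0:ℝ) τ, |V x| ≤ B := fun x hx => le_trans
    (by simpa using hB3 x hx) (le_trans (le_max_left _ _) (le_max_right _ _))
  have hBC : ∀ x ∈ Set.Icc (0:ℝ) τ, |C x| ≤ B := fun x hx => le_trans
    (by simpa using hB4 x hx) (le_trans (le_max_right _ _) (le_max_right _ _))
  have hB0 : 0 ≤ B := le_trans (abs_nonneg _) (hBT 0 ⟨le_rfl, hτ0⟩)
  set S := {t : ℝ | t ∈ Set.Icc (0:ℝ) τ ∧ ∀ s ∈ Set.Icc (0:ℝ) t, 0 ≤ g s} with hSdef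
  have hS0 : (0:ℝ) ∈ S := ⟨⟨le_rfl, hτ0⟩, fun s hs => by
    have hs0 : s = 0 := le_antisymm hs.2 hs.1
    rw [hs0]; exact hg0init⟩
  have hSbdd : BddAbove S := ⟨τ, fun t ht => ht.1.2⟩
  set tstar := sSup S with htsdef
  have hts0 : 0 ≤ tstar := le_csSup hSbdd hS0
  have htsτ : tstar ≤ τ := csSup_le ⟨0, hS0⟩ (fun t ht => ht.1.2)
  have hstar1 : ∀ s, 0 ≤ s → s < tstar → 0 ≤ g s := by
    intro s hs0 hs
    obtain ⟨t, htS, hst⟩ := exists_lt_of_lt_csSup ⟨0, hS0⟩ hs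
    exact htS.2 s ⟨hs0, hst.le⟩
  have hstar2 : ∀ s ∈ Set.Icc (0:ℝ) tstar, 0 ≤ g s := by
    intro s hs
    rcases lt_or_eq_of_le hs.2 with h | h
    · exact hstar1 s hs.1 h
    · rw [h]
      rcases eq_or_lt_of_le hts0 with h0 | h0
      · rw [← h0]; exact hg0init
      · have hconn : ContinuousWithinAt g (Set.Ioo 0 tstar) tstar :=
          (hgc.continuousWithinAt ⟨hts0, htsτ⟩).mono
            (fun x hx => ⟨hx.1.le, le_trans hx.2.le htsτ⟩)
        have hne : (𝓝[Set.Ioo (0:ℝ) tstar] tstar).NeBot := by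
          rw [← mem_closure_iff_nhdsWithin_neBot, closure_Ioo (ne_of_lt h0)]
          exact ⟨hts0, le_rfl⟩
        apply ge_of_tendsto hconn
        filter_upwards [self_mem_nhdsWithin] with x hx
        exact hstar1 x hx.1.le hx.2
  have htslt : tstar < τ := by
    rcases lt_or_eq_of_le htsτ with h | h
    · exact h
    · exfalso; have := hstar2 tstar ⟨hts0, le_rfl⟩; rw [h] at this; linarith
  have hΓ : 0 < Real.Gamma (1 - α) := Real.Gamma_pos_of_pos (by linarith)
  have hβα : 0 < β ^ α := Real.rpow_pos_of_pos hβ α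
  have hμα : 0 < μ ^ α := Real.rpow_pos_of_pos hμ α
  have hkα : 0 < k ^ α := Real.rpow_pos_of_pos hk α
  have hδα : 0 < δ ^ α := Real.rpow_pos_of_pos hδ α
  have hcα : 0 < c ^ α := Real.rpow_pos_of_pos hc α
  have hqα : 0 < q ^ α := Real.rpow_pos_of_pos hq α
  have hσα : 0 < σ ^ α := Real.rpow_pos_of_pos hσ α
  have hlamα : 0 < lam ^ α := Real.rpow_pos_of_pos hlam α
  set M := (β ^ α + k ^ α + q ^ α + N * δ ^ α) * (B + 1) + μ ^ α + δ ^ α + c ^ α + σ ^ α + 1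
    with hMdef
  have hM0 : 0 < M := by
    have h1 : 0 ≤ (β ^ α + k ^ α + q ^ α + N * δ ^ α) * (B + 1) :=
      mul_nonneg (by positivity) (by linarith)
    rw [hMdef]; linarith
  set R := M * Real.Gamma (1 - α) with hRdef
  have hR0 : 0 < R := mul_pos hM0 hΓ
  set ε0 : ℝ := (R + 1) ^ (-α⁻¹) with hε0def
  have hε0pos : 0 < ε0 := Real.rpow_pos_of_pos (by linarith) _
  have hε0val : ε0 ^ (-α) = R + 1 := by
    rw [hε0def, ← Real.rpow_mul (by linarith : (0:ℝ) ≤ R + 1),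
      show -α⁻¹ * -α = (1:ℝ) by field_simp, Real.rpow_one]
  set ε := min (τ - tstar) ε0 with hεdef
  have hε0' : 0 < ε := lt_min (by linarith) hε0pos
  set t1 := tstar + ε with ht1def
  have hεle1 : ε ≤ τ - tstar := min_le_left _ _
  have hεle2 : ε ≤ ε0 := min_le_right _ _
  have ht1τ : t1 ≤ τ := by
    have h : t1 = tstar + ε := ht1def
    linarith [hεle1, h.ge, h.le]
  have ht1S : t1 ∉ S := by
    intro h
    have := le_csSup hSbdd h
    rw [← htsdef] at this
    linarith
  have hexneg : ∃ s0 ∈ Set.Icc (0:ℝ) t1, g s0 < 0 := by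
    by_contra h
    push_neg at h
    exact ht1S ⟨⟨by linarith, ht1τ⟩, fun s hs => h s hs⟩
  obtain ⟨s0, hs0mem, hs0neg⟩ := hexneg
  obtain ⟨ρ, hρmem, hρmin⟩ := isCompact_Icc.exists_isMinOn
    (Set.nonempty_Icc.2 (by linarith : (0:ℝ) ≤ t1))
    (hgc.mono (Set.Icc_subset_Icc le_rfl ht1τ))
  rw [isMinOn_iff] at hρmin
  have hgρ : g ρ < 0 := lt_of_le_of_lt (hρmin s0 hs0mem) hs0neg
  have hρts : tstar < ρ := by
    by_contra h
    push_neg at h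
    exact absurd hgρ (not_lt.2 (hstar2 ρ ⟨hρmem.1, h⟩))
  have hρ0 : 0 < ρ := lt_of_le_of_lt hts0 hρts
  have hρτ : ρ ≤ τ := le_trans hρmem.2 ht1τ
  have hρIcc : ρ ∈ Set.Icc (0:ℝ) τ := ⟨hρ0.le, hρτ⟩
  have hminρ : ∀ s ∈ Set.Icc (0:ℝ) ρ, g ρ ≤ g s :=
    fun s hs => hρmin s ⟨hs.1, le_trans hs.2 hρmem.2⟩
  have hεREC : R + 1 ≤ (ρ - tstar) ^ (-α) := by
    have h1 : ρ - tstar ≤ ε0 := by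
      have h2 : ρ ≤ tstar + ε := hρmem.2
      linarith [hεle2]
    have h2 : (0:ℝ) < ρ - tstar := by linarith
    calc R + 1 = ε0 ^ (-α) := hε0val.symm
      _ ≤ (ρ - tstar) ^ (-α) := Real.rpow_le_rpow_of_nonpos h2 h1 (by linarith)
  have hcapup : ∀ y : ℝ → ℝ, ContDiffOn ℝ 1 y (Set.Ici 0) → (∀ t, g t ≤ y t) →
      y ρ = g ρ → caputoDeriv α 0 y ρ < g ρ * M := by
    intro y hycd hgley hyρ
    have h1 := caputo_min_bound α hα0 hα1 y hycd tstar ρ hts0 hρts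
      (fun s hs => by rw [hyρ]; exact le_trans (hminρ s hs) (hgley s))
      (fun s hs => le_trans (hstar2 s hs) (hgley s))
    rw [hyρ] at h1
    have h2 : g ρ * (ρ - tstar) ^ (-α) ≤ g ρ * (R + 1) :=
      mul_le_mul_of_nonpos_left hεREC hgρ.le
    have h3 : g ρ * (ρ - tstar) ^ (-α) / Real.Gamma (1 - α)
        ≤ g ρ * (R + 1) / Real.Gamma (1 - α) := by gcongr
    have h4 : g ρ * (R + 1) / Real.Gamma (1 - α)
        = g ρ * M + g ρ / Real.Gamma (1 - α) := by
      rw [hRdef]; field_simp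
    have h5 : g ρ / Real.Gamma (1 - α) < 0 := div_neg_of_neg_of_pos hgρ hΓ
    calc caputoDeriv α 0 y ρ ≤ g ρ * (ρ - tstar) ^ (-α) / Real.Gamma (1 - α) := h1
      _ ≤ g ρ * (R + 1) / Real.Gamma (1 - α) := h3
      _ = g ρ * M + g ρ / Real.Gamma (1 - α) := h4
      _ < g ρ * M := by linarith
  have hTb := abs_le.1 (hBT ρ hρIcc)
  have hIb := abs_le.1 (hBI ρ hρIcc)
  have hVb := abs_le.1 (hBV ρ hρIcc)
  have hCb := abs_le.1 (hBC ρ hρIcc)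
  have hgleρ := hgle ρ
  rcases min_cases (min (T ρ) (I ρ)) (min (V ρ) (C ρ)) with ⟨hm1, _⟩ | ⟨hm1, _⟩
  · rcases min_cases (T ρ) (I ρ) with ⟨hm2, _⟩ | ⟨hm2, _⟩
    · -- T ρ = g ρ
      have hyρ : T ρ = g ρ := (hm1.trans hm2).symm
      have hup := hcapup T hTcd (fun t => (hgle t).1) hyρ
      have heq := hT ρ hρ0
      rw [hyρ] at heq
      have hlow : g ρ * M ≤ lam ^ α - β ^ α * V ρ * g ρ - μ ^ α * g ρ := by
        have hV1 : -B ≤ V ρ := hVb.1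
        rw [hMdef]
        linarith [mul_nonneg (mul_nonneg hβα.le (by linarith : (0:ℝ) ≤ V ρ + B))
            (by linarith : (0:ℝ) ≤ -g ρ),
          mul_nonneg (mul_nonneg (by positivity : (0:ℝ) ≤ k ^ α + q ^ α + N * δ ^ α)
            (by linarith : (0:ℝ) ≤ B + 1)) (by linarith : (0:ℝ) ≤ -g ρ),
          mul_nonneg hβα.le (by linarith : (0:ℝ) ≤ -g ρ),
          mul_pos hμα (by linarith : (0:ℝ) < -g ρ),
          mul_nonneg (by positivity : (0:ℝ) ≤ δ ^ α + c ^ α + σ ^ α + 1)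
            (by linarith : (0:ℝ) ≤ -g ρ), hlamα]
      linarith
    · -- I ρ = g ρ
      have hyρ : I ρ = g ρ := (hm1.trans hm2).symm
      have hup := hcapup I hIcd (fun t => (hgle t).2.1) hyρ
      have heq := hI ρ hρ0
      rw [hyρ] at heq
      have hVT : B * g ρ ≤ V ρ * T ρ :=
        prod_ge hgρ.le hB0 hgleρ.2.2.1 hVb.2 hgleρ.1 hTb.2
      have hlow : g ρ * M ≤ β ^ α * V ρ * T ρ - k ^ α * g ρ * C ρ - δ ^ α * g ρ := by
        have hg1 : -B ≤ g ρ := by rw [← hyρ]; exact hIb.1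
        rw [hMdef]
        linarith [mul_le_mul_of_nonneg_left hVT hβα.le,
          mul_nonneg (mul_nonneg hkα.le (by linarith : (0:ℝ) ≤ -g ρ))
            (by linarith [hgleρ.2.2.2] : (0:ℝ) ≤ C ρ - g ρ),
          mul_nonneg (mul_nonneg hkα.le (by linarith : (0:ℝ) ≤ -g ρ))
            (by linarith : (0:ℝ) ≤ B + g ρ),
          mul_nonneg hβα.le (by linarith : (0:ℝ) ≤ -g ρ),
          mul_nonneg hkα.le (by linarith : (0:ℝ) ≤ -g ρ),
          mul_pos hδα (by linarith : (0:ℝ) < -g ρ),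
          mul_nonneg (mul_nonneg (by positivity : (0:ℝ) ≤ q ^ α + N * δ ^ α)
            (by linarith : (0:ℝ) ≤ B + 1)) (by linarith : (0:ℝ) ≤ -g ρ),
          mul_nonneg (by positivity : (0:ℝ) ≤ μ ^ α + c ^ α + σ ^ α + 1)
            (by linarith : (0:ℝ) ≤ -g ρ)]
      linarith
  · rcases min_cases (V ρ) (C ρ) with ⟨hm2, _⟩ | ⟨hm2, _⟩
    · -- V ρ = g ρ
      have hyρ : V ρ = g ρ := (hm1.trans hm2).symm
      have hup := hcapup V hVcd (fun t => (hgle t).2.2.1) hyρ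
      have heq := hV ρ hρ0
      rw [hyρ] at heq
      have hlow : g ρ * M ≤ N * δ ^ α * I ρ - c ^ α * g ρ := by
        rw [hMdef]
        linarith [mul_le_mul_of_nonneg_left hgleρ.2.1 (by positivity : (0:ℝ) ≤ N * δ ^ α),
          mul_pos hcα (by linarith : (0:ℝ) < -g ρ),
          mul_nonneg (mul_nonneg (by positivity : (0:ℝ) ≤ β ^ α + k ^ α + q ^ α)
            (by linarith : (0:ℝ) ≤ B + 1)) (by linarith : (0:ℝ) ≤ -g ρ),
          mul_nonneg (mul_nonneg (by positivity : (0:ℝ) ≤ N * δ ^ α) hB0)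
            (by linarith : (0:ℝ) ≤ -g ρ),
          mul_nonneg (by positivity : (0:ℝ) ≤ μ ^ α + δ ^ α + σ ^ α + 1)
            (by linarith : (0:ℝ) ≤ -g ρ)]
      linarith
    · -- C ρ = g ρ
      have hyρ : C ρ = g ρ := (hm1.trans hm2).symm
      have hup := hcapup C hCcd (fun t => (hgle t).2.2.2) hyρ
      have heq := hC ρ hρ0
      rw [hyρ] at heq
      have hlow : g ρ * M ≤ q ^ α * I ρ * g ρ - σ ^ α * g ρ := by
        rw [hMdef]
        linarith [mul_nonneg (mul_nonneg hqα.le (by linarith [hIb.2] : (0:ℝ) ≤ B - I ρ))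
            (by linarith : (0:ℝ) ≤ -g ρ),
          mul_nonneg hqα.le (by linarith : (0:ℝ) ≤ -g ρ),
          mul_pos hσα (by linarith : (0:ℝ) < -g ρ),
          mul_nonneg (mul_nonneg (by positivity : (0:ℝ) ≤ β ^ α + k ^ α + N * δ ^ α)
            (by linarith : (0:ℝ) ≤ B + 1)) (by linarith : (0:ℝ) ≤ -g ρ),
          mul_nonneg (by positivity : (0:ℝ) ≤ μ ^ α + δ ^ α + c ^ α + 1)
            (by linarith : (0:ℝ) ≤ -g ρ)]
      linarith
end
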